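/- arXiv:2405.09946 — 11 statements merged into one kernel-verified Lean document; each statement's English description precedes it below -/
import Mathlib

section
/- For every type A and every T : Set (List A), the Teichmüller–Tukey lemma TTL(A,T) is equivalent (using classical logic) to generalised update induction GUI(A,Tᶜ), where Tᶜ := {u | u ∉ T} is the complement of T. -/
namespace Paper

universe u v

/-- `listSub u α` : every element of the list `u` belongs to `α` (written `u ⊂ α`). -/
def listSub {A : Type u} (u : List A) (α : Set A) : Prop := ∀ a ∈ u, a ∈ α

/-- `⟨T⟩` : the sets all of whose finite sublists are in `T`. -/
def eng {A : Type u} (T : Set (List A)) : Set (Set A) :=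
  {α | ∀ l : List A, listSub l α → l ∈ T}

/-- `⟨T⟩∃` : the sets having some finite sublist in `T`. -/
def engE {A : Type u} (T : Set (List A)) : Set (Set A) :=
  {α | ∃ l : List A, listSub l α ∧ l ∈ T}

/-- `û` : the set of elements of the list `u`. -/
def hat {A : Type u} (l : List A) : Set A := {a | a ∈ l}

/-- `⌊P⌋` : the lists whose set of elements is in `P`. -/
def res {A : Type u} (P : Set (Set A)) : Set (List A) := {l | hat l ∈ P}

/-- `β ≺ α` : `β` is an update of `α` by one new element. -/
def upd {A : Type u} (β α : Set A) : Prop := ∃ a, a ∉ α ∧ β = α ∪ {a}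

/-- `α` is `≺`-maximal in `P`. -/
def MaxUpd {A : Type u} (P : Set (Set A)) (α : Set A) : Prop :=
  α ∈ P ∧ ∀ β, upd β α → β ∉ P

/-- Teichmüller–Tukey lemma for `T`. -/
def TTL {A : Type u} (T : Set (List A)) : Prop :=
  (∃ α : Set A, α ∈ eng T) → ∃ α : Set A, MaxUpd (eng T) α

/-- Generalised update induction for `U`. -/
def GUI {A : Type u} (U : Set (List A)) : Prop :=
  (∀ α : Set A, (∀ β : Set A, upd β α → β ∈ engE U) → α ∈ engE U) →
    ∀ α : Set A, α ∈ engE U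

/-- `TTL(A,T)` is equivalent to `GUI(A,Tᶜ)`. -/
theorem TTL_iff_GUI_compl (A : Type u) (T : Set (List A)) :
    TTL T ↔ GUI {l : List A | l ∉ T} := by
  have key : ∀ α : Set A, α ∈ engE {l : List A | l ∉ T} ↔ α ∉ eng T := by
    intro α
    simp only [engE, eng, Set.mem_setOf_eq]
    push_neg
    tauto
  constructor
  · intro h hind α
    rw [key]
    intro hα
    obtain ⟨β, hβ, hmax⟩ := h ⟨α, hα⟩
    have hb := hind β
    rw [key] at hb
    exact hb (fun γ hγ => (key γ).mpr (hmax γ hγ)) hβ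
  · rintro h ⟨α, hα⟩
    by_contra hno
    push_neg at hno
    have := h (fun β hb => (key β).mpr (fun hβT => hno β ⟨hβT, fun γ hγ hγT => (key γ).mp (hb γ hγ) hγT⟩)) α
    exact (key α).mp this hα

end Paper
end

section
/- Let A be a type, < a strict (irreflexive and transitive) order on A and E : Set A. If the instance TTL(A, ⌊SCh(E)⌋) of the Teichmüller–Tukey lemma holds, then Zorn(A, <, E) holds. -/
namespace Paper

universe u v

/-- `F` is a subchain of `E` with respect to the strict order `lt`. -/
def Subchain {X : Type u} (lt : X → X → Prop) (E F : Set X) : Prop :=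
  F ⊆ E ∧ ∀ a ∈ F, ∀ b ∈ F, lt a b ∨ lt b a ∨ a = b

/-- `SCh E` : the set of subchains of `E`. -/
def SCh {X : Type u} (lt : X → X → Prop) (E : Set X) : Set (Set X) :=
  {F | Subchain lt E F}

/-- `E` is inductive: every subchain has an upper bound in `E` for the
reflexive closure of `lt`. -/
def IsInductive {X : Type u} (lt : X → X → Prop) (E : Set X) : Prop :=
  ∀ F : Set X, Subchain lt E F → ∃ a ∈ E, ∀ b ∈ F, b = a ∨ lt b a

/-- `a` is `lt`-maximal in `E`. -/
def MaxLt {X : Type u} (lt : X → X → Prop) (E : Set X) (a : X) : Prop :=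
  a ∈ E ∧ ∀ b, lt a b → b ∉ E

/-- Zorn's lemma for the strict order `lt` and the set `E`. -/
def Zorn {X : Type u} (lt : X → X → Prop) (E : Set X) : Prop :=
  IsInductive lt E → ∃ a, MaxLt lt E a

/-- `TTL(A, ⌊SCh(E)⌋)` implies `Zorn(A, <, E)`. -/
theorem TTL_res_SCh_implies_Zorn (A : Type u) (lt : A → A → Prop)
    (hirr : Irreflexive lt) (htrans : Transitive lt) (E : Set A) :
    TTL (res (SCh lt E)) → Zorn lt E := by
  intro httl hind
  have key : ∀ α : Set A, α ∈ eng (res (SCh lt E)) ↔ Subchain lt E α := by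
    intro α
    constructor
    · intro h
      constructor
      · intro a ha
        have := h [a] (by intro x hx; simp at hx; subst hx; exact ha)
        exact this.1 (by simp [hat])
      · intro a ha b hb
        have := h [a, b] (by
          intro x hx; simp at hx; rcases hx with rfl | rfl; exacts [ha, hb])
        have hc := this.2 a (by simp [hat]) b (by simp [hat])
        exact hc
    · intro h l hl
      constructor
      · intro x hx; exact h.1 (hl x hx)
      · intro a ha b hb; exact h.2 a (hl a ha) b (hl b hb)
  have hne : ∃ α : Set A, α ∈ eng (res (SCh lt E)) := by
    refine ⟨∅, (key ∅).2 ?_⟩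
    exact ⟨fun x hx => absurd hx (by simp), fun a ha => absurd ha (by simp)⟩
  obtain ⟨α, hαmem, hαmax⟩ := httl hne
  have hch : Subchain lt E α := (key α).1 hαmem
  obtain ⟨a, haE, hub⟩ := hind α hch
  refine ⟨a, haE, ?_⟩
  intro b hab hbE
  have hbα : b ∉ α := by
    intro hbα
    rcases hub b hbα with h | hba
    · exact hirr a (h ▸ hab)
    · exact hirr a (htrans hab hba)
  apply hαmax (α ∪ {b}) ⟨b, hbα, rfl⟩
  apply (key _).2
  constructor
  · intro x hx
    rcases hx with hx | hx
    · exact hch.1 hx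
    · simp at hx; subst hx; exact hbE
  · intro x hx y hy
    have comp : ∀ c ∈ α, lt c b := by
      intro c hc
      rcases hub c hc with rfl | hca
      · exact hab
      · exact htrans hca hab
    rcases hx with hx | hx <;> rcases hy with hy | hy
    · exact hch.2 x hx y hy
    · simp at hy; subst hy; exact Or.inl (comp x hx)
    · simp at hx; subst hx; exact Or.inr (Or.inl (comp y hy))
    · simp at hx hy; subst hx; subst hy; exact Or.inr (Or.inr rfl)

end Paper
end

section
/- For every type A and every T : Set (List A): if Zorn(Set A, ⊊, ⟨T⟩) holds, where ⊊ is strict inclusion on Set A and the ambient set is ⟨T⟩, then TTL(A,T) holds. -/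
/-!
Membership in `⟨T⟩` is a condition on finitely many elements at a time, and every list contained
in the union of a nonempty `⊆`-chain is already contained in one of its members. Hence `⟨T⟩` is
closed under unions of nonempty chains, which makes it inductive for `⊊` (the empty chain is bounded
by any element of `⟨T⟩`). A `⊊`-maximal element is `≺`-maximal because `α ⊊ α ∪ {a}` for `a ∉ α`.
-/

namespace Paper

universe u v

section

variable {X : Type u}

theorem Subchain.isChain_subset {E F : Set (Set X)} (hF : Subchain (· ⊂ ·) E F) :
    IsChain (· ⊆ ·) F := by
  intro β hβ γ hγ _
  rcases hF.2 β hβ γ hγ with h | h | rfl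
  · exact Or.inl h.subset
  · exact Or.inr h.subset
  · exact Or.inl subset_rfl

theorem isInductive_ssubset_of_sUnion_mem {E : Set (Set X)} (hE : E.Nonempty)
    (hunion : ∀ F ⊆ E, F.Nonempty → IsChain (· ⊆ ·) F → ⋃₀ F ∈ E) :
    IsInductive (· ⊂ ·) E := by
  intro F hF
  rcases F.eq_empty_or_nonempty with rfl | hFne
  · obtain ⟨α, hα⟩ := hE
    exact ⟨α, hα, fun _ hb => hb.elim⟩
  · exact ⟨⋃₀ F, hunion F hF.1 hFne hF.isChain_subset,
      fun β hβ => (Set.subset_sUnion_of_mem hβ).eq_or_ssubset⟩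

theorem MaxLt.maxUpd {P : Set (Set X)} {α : Set X} (h : MaxLt (· ⊂ ·) P α) : MaxUpd P α := by
  refine ⟨h.1, ?_⟩
  rintro β ⟨a, ha, rfl⟩
  exact h.2 _ (Set.union_singleton ▸ Set.ssubset_insert ha)

theorem sUnion_mem_eng {T : Set (List X)} {F : Set (Set X)} (hFne : F.Nonempty)
    (hdir : DirectedOn (· ⊆ ·) F) (hF : F ⊆ eng T) : ⋃₀ F ∈ eng T := by
  intro l hl
  obtain ⟨β, hβ, hlβ⟩ :=
    hdir.exists_mem_subset_of_finite_of_subset_sUnion hFne (List.finite_toSet l) hl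
  exact hF hβ l hlβ

end

/-- `Zorn(Set A, ⊊, ⟨T⟩)` implies `TTL(A,T)`. -/
theorem Zorn_ssubset_eng_implies_TTL (A : Type u) (T : Set (List A)) :
    Zorn (fun α β : Set A => α ⊂ β) (eng T) → TTL T := by
  intro hzorn hne
  have hind : IsInductive (fun α β : Set A => α ⊂ β) (eng T) :=
    isInductive_ssubset_of_sUnion_mem hne fun F hFE hFne hchain =>
      sUnion_mem_eng hFne hchain.directedOn hFE
  obtain ⟨α, hα⟩ := hzorn hind
  exact ⟨α, hα.maxUpd⟩

end Paper
end

section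
/- For every type A, every strict (irreflexive and transitive) order < on A and every E : Set A, there exists a 'list of chains' T ∈ C_A such that SCh(E) = ⟨T⟩. -/
namespace Paper

universe u v

/-- `T` is a 'list of chains' (`T ∈ C_A`). -/
def IsListOfChains {A : Type u} (T : Set (List A)) : Prop :=
  ∃ T' : Set (List A),
    [] ∈ T' ∧
    (∀ (l v : List A) (a : A), (l ++ [a] ∈ T' ∧ [a] ++ v ∈ T') ↔ l ++ [a] ++ v ∈ T') ∧
    (∀ (l v : List A) (a : A), l ++ [a] ++ v ∈ T' → l ++ v ∈ T') ∧
    (∀ (a b : A) (l v w : List A), a ≠ b → l ++ [a] ++ v ++ [b] ++ w ∈ T' →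
      ∀ l' v' w' : List A, l' ++ [b] ++ v' ++ [a] ++ w' ∉ T') ∧
    T = {l | ∃ v ∈ T', ∀ a ∈ l, a ∈ v}

open Classical in
/-- insert `a` into a strictly sorted list. -/
noncomputable def insL {A : Type u} (lt : A → A → Prop) (a : A) : List A → List A
  | [] => [a]
  | b :: t => if a = b then b :: t else if lt a b then a :: b :: t else b :: insL lt a t

lemma insL_mem {A : Type u} (lt : A → A → Prop) (a x : A) :
    ∀ v : List A, (x ∈ insL lt a v ↔ x = a ∨ x ∈ v) := by
  intro v
  induction v with
  | nil => simp [insL]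
  | cons b t ih =>
    by_cases h1 : a = b
    · subst h1; simp [insL]
    · by_cases h2 : lt a b
      · simp [insL, h1, h2]
      · simp [insL, h1, h2, ih]; tauto

lemma insL_pairwise {A : Type u} {lt : A → A → Prop} (htrans : Transitive lt) (a : A) :
    ∀ v : List A, List.Pairwise lt v → (∀ x ∈ v, lt a x ∨ lt x a ∨ a = x) →
      List.Pairwise lt (insL lt a v) := by
  intro v
  induction v with
  | nil => intro _ _; simp [insL]
  | cons b t ih =>
    intro hp hcomp
    rw [List.pairwise_cons] at hp
    by_cases h1 : a = b
    · subst h1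
      simp only [insL, if_pos rfl]
      exact List.pairwise_cons.mpr hp
    · by_cases h2 : lt a b
      · simp only [insL, if_neg h1, if_pos h2]
        refine List.pairwise_cons.mpr ⟨?_, List.pairwise_cons.mpr hp⟩
        intro x hx
        rcases List.mem_cons.mp hx with rfl | hx
        · exact h2
        · exact htrans h2 (hp.1 x hx)
      · have hba : lt b a := by
          rcases hcomp b (by simp) with h | h | h
          · exact absurd h h2
          · exact h
          · exact absurd h h1
        simp only [insL, if_neg h1, if_neg h2]
        refine List.pairwise_cons.mpr ⟨?_, ih hp.2 (fun x hx => hcomp x (by simp [hx]))⟩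
        intro x hx
        rcases (insL_mem lt a x t).mp hx with rfl | hx
        · exact hba
        · exact hp.1 x hx

lemma pairwise_comp {A : Type u} {lt : A → A → Prop} {a b : A} :
    ∀ v : List A, List.Pairwise lt v → a ∈ v → b ∈ v → lt a b ∨ lt b a ∨ a = b := by
  intro v
  induction v with
  | nil => simp
  | cons c t ih =>
    intro hp ha hb
    rw [List.pairwise_cons] at hp
    rcases List.mem_cons.mp ha with h | ha
    · rcases List.mem_cons.mp hb with h' | hb
      · exact Or.inr (Or.inr (h.trans h'.symm))
      · exact Or.inl (h ▸ hp.1 b hb)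
    · rcases List.mem_cons.mp hb with h' | hb
      · exact Or.inr (Or.inl (h' ▸ hp.1 a ha))
      · exact ih hp.2 ha hb

/-- every `SCh(E)` is `⟨T⟩` for some list of chains `T ∈ C_A`. -/
theorem SCh_eq_eng_listOfChains (A : Type u) (lt : A → A → Prop)
    (hirr : Irreflexive lt) (htrans : Transitive lt) (E : Set A) :
    ∃ T : Set (List A), IsListOfChains T ∧ SCh lt E = eng T := by
  set T' : Set (List A) := {l | List.Pairwise lt l ∧ ∀ a ∈ l, a ∈ E} with hT'
  refine ⟨{l | ∃ v ∈ T', ∀ a ∈ l, a ∈ v}, ⟨T', ?_, ?_, ?_, ?_, rfl⟩, ?_⟩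
  · exact ⟨List.Pairwise.nil, by simp⟩
  · -- (ii)
    intro l v a
    constructor
    · rintro ⟨⟨hp1, he1⟩, ⟨hp2, he2⟩⟩
      constructor
      · rw [show l ++ [a] ++ v = (l ++ [a]) ++ v by simp, List.pairwise_append]
        refine ⟨hp1, (List.pairwise_cons.mp hp2).2, ?_⟩
        intro x hx y hy
        have hay : lt a y := (List.pairwise_cons.mp hp2).1 y hy
        rcases List.mem_append.mp hx with hx | hx
        · have := (List.pairwise_append.mp hp1).2.2 x hx a (by simp)
          exact htrans this hay
        · simp at hx; subst hx; exact hay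
      · intro x hx
        have hx' : x ∈ l ∨ x = a ∨ x ∈ v := by simpa using hx
        rcases hx' with hx' | hx' | hx'
        · exact he1 x (by simp [hx'])
        · exact he2 x (by simp [hx'])
        · exact he2 x (by simp [hx'])
    · rintro ⟨hp, he⟩
      rw [show l ++ [a] ++ v = (l ++ [a]) ++ v by simp, List.pairwise_append] at hp
      refine ⟨⟨hp.1, fun x hx => he x (by simp at hx ⊢; tauto)⟩,
        ⟨List.pairwise_cons.mpr ⟨fun y hy => hp.2.2 a (by simp) y hy, hp.2.1⟩,
          fun x hx => he x (by simp at hx ⊢; tauto)⟩⟩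
  · -- (iii)
    rintro l v a ⟨hp, he⟩
    have hsub : (l ++ v).Sublist (l ++ [a] ++ v) := by
      rw [show l ++ [a] ++ v = l ++ ([a] ++ v) by simp]
      exact (List.sublist_cons_self a v).append_left l
    exact ⟨hp.sublist hsub, fun x hx => he x (hsub.mem hx)⟩
  · -- (iv)
    rintro a b l v w hab ⟨hp, _⟩ l' v' w' ⟨hp', _⟩
    have h1 : lt a b := by
      rw [show l ++ [a] ++ v ++ [b] ++ w = (l ++ [a]) ++ (v ++ [b] ++ w) by simp,
        List.pairwise_append] at hp
      exact hp.2.2 a (by simp) b (by simp)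
    have h2 : lt b a := by
      rw [show l' ++ [b] ++ v' ++ [a] ++ w' = (l' ++ [b]) ++ (v' ++ [a] ++ w') by simp,
        List.pairwise_append] at hp'
      exact hp'.2.2 b (by simp) a (by simp)
    exact hirr a (htrans h1 h2)
  · -- SCh lt E = eng T
    ext F
    constructor
    · rintro ⟨hFE, hcomp⟩ l hl
      -- build a sorted list containing all elements of l
      have : ∃ v : List A, List.Pairwise lt v ∧ (∀ x ∈ v, x ∈ F) ∧ ∀ x ∈ l, x ∈ v := by
        induction l with
        | nil => exact ⟨[], List.Pairwise.nil, by simp, by simp⟩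
        | cons a t ih =>
          obtain ⟨v, hv1, hv2, hv3⟩ := ih (fun x hx => hl x (by simp [hx]))
          have haF : a ∈ F := hl a (by simp)
          refine ⟨insL lt a v, insL_pairwise htrans a v hv1
            (fun x hx => hcomp a haF x (hv2 x hx)), ?_, ?_⟩
          · intro x hx
            rcases (insL_mem lt a x v).mp hx with rfl | hx
            · exact haF
            · exact hv2 x hx
          · intro x hx
            rcases List.mem_cons.mp hx with rfl | hx
            · exact (insL_mem lt x x v).mpr (Or.inl rfl)
            · exact (insL_mem lt a x v).mpr (Or.inr (hv3 x hx))
      obtain ⟨v, hv1, hv2, hv3⟩ := this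
      exact ⟨v, ⟨hv1, fun x hx => hFE (hv2 x hx)⟩, hv3⟩
    · intro hF
      constructor
      · intro a ha
        obtain ⟨v, ⟨_, hvE⟩, hmem⟩ := hF [a] (by intro x hx; simp at hx; subst hx; exact ha)
        exact hvE a (hmem a (by simp))
      · intro a ha b hb
        obtain ⟨v, ⟨hvp, _⟩, hmem⟩ := hF [a, b]
          (by intro x hx; simp at hx; rcases hx with rfl | rfl <;> assumption)
        exact pairwise_comp v hvp (hmem a (by simp)) (hmem b (by simp))

end Paper
end

section
/- For every type A with decidable equality and every 'list of chains' T ∈ C_A, there exist a strict (irreflexive and transitive) order < on A and a set E : Set A such that SCh(E) = ⟨T⟩. -/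
/-!
Take `a < b` to mean `a ≠ b ∧ [a, b] ∈ T'` and `E = {a | [a] ∈ T'}`. Deletion makes `T'`
closed under sublists, so distinct letters of a list of `T'` are comparable; transitivity
comes from gluing `[a, b]` and `[b, c]` along `b` and deleting `b`, the swap condition ruling
out `a = c`. Conversely, gluing puts every `<`-increasing list of elements of `E` into `T'`,
and any finite part of a chain can be listed increasingly.
-/

namespace Paper

universe u v

theorem exists_pairwise_mem_iff {α : Type*} {r : α → α → Prop} [IsTrans α r] :
    ∀ {l : List α}, (∀ a ∈ l, ∀ b ∈ l, r a b ∨ r b a ∨ a = b) →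
      ∃ v : List α, v.Pairwise r ∧ ∀ x, x ∈ v ↔ x ∈ l
  | [], _ => ⟨[], .nil, by simp⟩
  | a :: l, hl => by
    classical
    obtain ⟨v, hv, hmem⟩ := exists_pairwise_mem_iff
      fun x hx y hy => hl x (.tail _ hx) y (.tail _ hy)
    by_cases hav : a ∈ v
    · exact ⟨v, hv, fun x => by grind⟩
    refine ⟨v.filter (r · a) ++ a :: v.filter (r a ·), ?_, fun x => ?_⟩
    · simp only [List.pairwise_append, List.pairwise_cons, List.mem_cons, List.mem_filter,
        decide_eq_true_eq]
      refine ⟨hv.filter _, ⟨fun _ hy => hy.2, hv.filter _⟩, ?_⟩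
      rintro x ⟨_, hxa⟩ y (rfl | ⟨_, hay⟩)
      exacts [hxa, _root_.trans hxa hay]
    · have := hl a (by simp) x
      simp only [List.mem_append, List.mem_cons, List.mem_filter, decide_eq_true_eq, hmem]
        at this ⊢
      grind

section ChainLists

open List

variable {A : Type u} {T' : Set (List A)}

/-- The conditions (i)–(iv) on the generating set `T'` of a list of chains. -/
structure ChainLists (T' : Set (List A)) : Prop where
  nil_mem : [] ∈ T'
  glue : ∀ (l v : List A) (a : A), (l ++ [a] ∈ T' ∧ [a] ++ v ∈ T') ↔ l ++ [a] ++ v ∈ T'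
  erase_mem : ∀ (l v : List A) (a : A), l ++ [a] ++ v ∈ T' → l ++ v ∈ T'
  not_mem_swap : ∀ (a b : A) (l v w : List A), a ≠ b → l ++ [a] ++ v ++ [b] ++ w ∈ T' →
    ∀ l' v' w' : List A, l' ++ [b] ++ v' ++ [a] ++ w' ∉ T'

def precedes (T' : Set (List A)) (a b : A) : Prop := a ≠ b ∧ [a, b] ∈ T'

namespace ChainLists

variable (h : ChainLists T')
include h

theorem append_mem_of_sublist {u v : List A} (huv : u <+ v) :
    ∀ p, p ++ v ∈ T' → p ++ u ∈ T' := by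
  induction huv with
  | slnil => exact fun _ hp => hp
  | cons a _ ih => exact fun p hp => ih p (h.erase_mem p _ a (by simpa using hp))
  | cons_cons a _ ih => exact fun p hp => by simpa using ih (p ++ [a]) (by simpa using hp)

theorem mem_of_sublist {u v : List A} (huv : u <+ v) (hv : v ∈ T') : u ∈ T' :=
  h.append_mem_of_sublist huv [] hv

theorem precedes_trans {a b c : A} (hab : precedes T' a b) (hbc : precedes T' b c) :
    precedes T' a c := by
  refine ⟨?_, ?_⟩
  · rintro rfl
    exact h.not_mem_swap a b [] [] [] hab.1 hab.2 [] [] [] hbc.2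
  · have habc : [a] ++ [b] ++ [c] ∈ T' := (h.glue [a] [c] b).mp ⟨hab.2, hbc.2⟩
    exact h.erase_mem [a] [c] b habc

theorem mem_of_pairwise_precedes :
    ∀ {v : List A}, (∀ a ∈ v, [a] ∈ T') → v.Pairwise (precedes T') → v ∈ T'
  | [], _, _ => h.nil_mem
  | [a], hv, _ => hv a (by simp)
  | a :: b :: w, hv, hp => by
    have hbw : b :: w ∈ T' :=
      mem_of_pairwise_precedes (fun x hx => hv x (.tail _ hx)) hp.of_cons
    exact (h.glue [a] w b).mp ⟨(rel_of_pairwise_cons hp (by simp)).2, hbw⟩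

theorem precedes_or_precedes_of_mem {v : List A} (hv : v ∈ T') {a b : A} (ha : a ∈ v)
    (hb : b ∈ v) : precedes T' a b ∨ precedes T' b a ∨ a = b := by
  let R x y := x ≠ y → precedes T' x y ∨ precedes T' y x
  have : Std.Symm R := ⟨fun _ _ hxy hne => (hxy hne.symm).symm⟩
  have hpair : v.Pairwise R :=
    pairwise_iff_forall_sublist.mpr fun hxy hne => .inl ⟨hne, h.mem_of_sublist hxy hv⟩
  by_cases hab : a = b
  · exact .inr (.inr hab)
  · exact (hpair.forall ha hb hab hab).elim .inl (.inr ∘ .inl)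

theorem SCh_subset_eng :
    SCh (precedes T') {a | [a] ∈ T'} ⊆ eng {l | ∃ v ∈ T', ∀ a ∈ l, a ∈ v} := by
  have : IsTrans A (precedes T') := ⟨fun _ _ _ => h.precedes_trans⟩
  rintro α ⟨hαE, hchain⟩ l hl
  obtain ⟨v, hv, hmem⟩ := exists_pairwise_mem_iff
    fun a ha b hb => hchain a (hl a ha) b (hl b hb)
  exact ⟨v, h.mem_of_pairwise_precedes (fun a ha => hαE (hl a ((hmem a).mp ha))) hv,
    fun a ha => (hmem a).mpr ha⟩

theorem eng_subset_SCh :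
    eng {l | ∃ v ∈ T', ∀ a ∈ l, a ∈ v} ⊆ SCh (precedes T') {a | [a] ∈ T'} := by
  intro α hα
  refine ⟨fun a ha => ?_, fun a ha b hb => ?_⟩
  · obtain ⟨v, hv, hav⟩ := hα [a] (by simpa [listSub] using ha)
    exact h.mem_of_sublist (singleton_sublist.mpr (hav a (by simp))) hv
  · obtain ⟨v, hv, habv⟩ := hα [a, b] (by simp [listSub, ha, hb])
    exact h.precedes_or_precedes_of_mem hv (habv a (by simp)) (habv b (by simp))

end ChainLists

end ChainLists

theorem listOfChains_eq_SCh_general (A : Type u)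
    (T : Set (List A)) (hT : IsListOfChains T) :
    ∃ (lt : A → A → Prop) (E : Set A),
      Irreflexive lt ∧ Transitive lt ∧ SCh lt E = eng T := by
  obtain ⟨T', h₁, h₂, h₃, h₄, rfl⟩ := hT
  have h : ChainLists T' := ⟨h₁, h₂, h₃, h₄⟩
  exact ⟨precedes T', {a | [a] ∈ T'}, fun _ hab => hab.1 rfl, fun _ _ _ => h.precedes_trans,
    h.SCh_subset_eng.antisymm h.eng_subset_SCh⟩

/-- every list of chains `T ∈ C_A` arises as `SCh(E)` for some
strict order and some `E`. -/
theorem listOfChains_eq_SCh (A : Type u) [DecidableEq A]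
    (T : Set (List A)) (hT : IsListOfChains T) :
    ∃ (lt : A → A → Prop) (E : Set A),
      Irreflexive lt ∧ Transitive lt ∧ SCh lt E = eng T :=
  listOfChains_eq_SCh_general A T hT

end Paper
end

section
/- If Zorn(Set A, ⊊, ⟨T⟩) holds for every type A (in a fixed universe) and every T : Set (List A) (where ⊊ is strict inclusion on Set A), then Zorn(A, <, E) holds for every type A in that universe, every strict (irreflexive and transitive) order < on A and every E : Set A; i.e. Zorn's lemma restricted to powerset-inclusion instances on predicates of the form ⟨T⟩ is equivalent to full Zorn's lemma. -/
namespace Paper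

universe u v

/-- Zorn's lemma restricted to powerset-inclusion instances on
predicates of the form `⟨T⟩` implies full Zorn's lemma. -/
theorem Zorn_eng_implies_Zorn
    (h : ∀ (A : Type u) (T : Set (List A)),
      Zorn (fun α β : Set A => α ⊂ β) (eng T)) :
    ∀ (A : Type u) (lt : A → A → Prop), Irreflexive lt → Transitive lt →
      ∀ E : Set A, Zorn lt E := by
  intro A lt hirr htrans E hind
  set T : Set (List A) := {l | Subchain lt E (hat l)} with hT
  have heng : ∀ α : Set A, α ∈ eng T ↔ Subchain lt E α := by
    intro α
    constructor
    · intro hα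
      constructor
      · intro a ha
        exact (hα [a] (by intro x hx; simp at hx; simpa [hx])).1 (by simp [hat])
      · intro a ha b hb
        have := hα [a, b] (by intro x hx; simp at hx; rcases hx with rfl | rfl <;> assumption)
        exact this.2 a (by simp [hat]) b (by simp [hat])
    · intro hα l hl
      exact ⟨fun a ha => hα.1 (hl a ha), fun a ha b hb => hα.2 a (hl a ha) b (hl b hb)⟩
  have hindT : IsInductive (fun α β : Set A => α ⊂ β) (eng T) := by
    intro F hF
    refine ⟨⋃₀ F, ?_, ?_⟩
    · rw [heng]
      constructor
      · rintro a ⟨C, hC, haC⟩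
        exact ((heng C).1 (hF.1 hC)).1 haC
      · rintro a ⟨C, hC, haC⟩ b ⟨D, hD, hbD⟩
        rcases hF.2 C hC D hD with h1 | h1 | rfl
        · exact ((heng D).1 (hF.1 hD)).2 a (h1.1 haC) b hbD
        · exact ((heng C).1 (hF.1 hC)).2 a haC b (h1.1 hbD)
        · exact ((heng C).1 (hF.1 hC)).2 a haC b hbD
    · intro b hb
      have hsub : b ⊆ ⋃₀ F := fun x hx => ⟨b, hb, hx⟩
      rcases eq_or_ne b (⋃₀ F) with hbe | hne
      · exact Or.inl hbe
      · exact Or.inr (ssubset_of_subset_of_ne hsub hne)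
  obtain ⟨M, hM, hMmax⟩ := h A T hindT
  have hMchain : Subchain lt E M := (heng M).1 hM
  obtain ⟨a, haE, hub⟩ := hind M hMchain
  refine ⟨a, haE, ?_⟩
  intro b hab hbE
  have hbM : b ∉ M := by
    intro hbM
    rcases hub b hbM with heq | hba
    · exact hirr a (heq ▸ hab)
    · exact hirr a (htrans hab hba)
  have hlt : ∀ z ∈ M, lt z b := by
    intro z hz
    rcases hub z hz with heq | hza
    · exact heq.symm ▸ hab
    · exact htrans hza hab
  refine hMmax (insert b M) (Set.ssubset_insert hbM) ((heng _).2 ?_)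
  constructor
  · intro x hx
    rcases hx with rfl | hx
    · exact hbE
    · exact hMchain.1 hx
  · intro x hx y hy
    rcases hx with rfl | hx <;> rcases hy with rfl | hy
    · exact Or.inr (Or.inr rfl)
    · exact Or.inr (Or.inl (hlt y hy))
    · exact Or.inl (hlt x hx)
    · exact hMchain.2 x hx y hy

end Paper
end

section
/- For all types A, B and every T : Set (List (A × B)), EMPCF(A,B,T) implies EMPCF⁻(A,B,T) (using classical logic). -/
namespace Paper

universe u v

/-- `f` is a relational partial function from `A` to `B`. -/
def IsRPF {A : Type u} {B : Type v} (f : Set (A × B)) : Prop :=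
  ∀ (a : A) (b b' : B), (a, b) ∈ f → (a, b') ∈ f → b = b'

/-- Domain of a relational partial function. -/
def rdom {A : Type u} {B : Type v} (f : Set (A × B)) : Set A := {a | ∃ b, (a, b) ∈ f}

/-- `g ≺ f` for relational partial functions: `g` extends `f` by one new point. -/
def rext {A : Type u} {B : Type v} (g f : Set (A × B)) : Prop :=
  ∃ a, a ∉ rdom f ∧ rdom g = rdom f ∪ {a} ∧ ∀ x ∈ rdom f, ∃ b, (x, b) ∈ f ∧ (x, b) ∈ g

/-- `f` is rpf-maximal in `P`. -/
def MaxRPF {A : Type u} {B : Type v} (P : Set (Set (A × B))) (f : Set (A × B)) : Prop :=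
  f ∈ P ∧ ∀ g : Set (A × B), IsRPF g → rext g f → g ∉ P

/-- `EMPCF⁻(A,B,T)` : existence of a maximal relational partial choice function. -/
def EMPCFminus {A : Type u} {B : Type v} (T : Set (List (A × B))) : Prop :=
  (∃ α : Set (A × B), α ∈ eng T) → ∃ f : Set (A × B), IsRPF f ∧ MaxRPF (eng T) f

/-- Domain of a decidable partial function. -/
def ddom {A : Type u} {B : Type v} (f : A → Option B) : Set A := {a | f a ≠ none}

/-- Graph of a decidable partial function. -/
def dgraph {A : Type u} {B : Type v} (f : A → Option B) : Set (A × B) :=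
  {p | f p.1 = some p.2}

/-- `g ≺ f` for decidable partial functions: `g` extends `f` by one new point. -/
def dext {A : Type u} {B : Type v} (g f : A → Option B) : Prop :=
  ∃ a, a ∉ ddom f ∧ ddom g = ddom f ∪ {a} ∧ ∀ x ∈ ddom f, f x = g x

/-- `f` is dpf-maximal in `P`. -/
def MaxDPF {A : Type u} {B : Type v} (P : Set (Set (A × B))) (f : A → Option B) : Prop :=
  dgraph f ∈ P ∧ ∀ g : A → Option B, dext g f → dgraph g ∉ P

/-- `EMPCF(A,B,T)` : existence of a maximal decidable partial choice function. -/
def EMPCF {A : Type u} {B : Type v} (T : Set (List (A × B))) : Prop :=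
  (∃ α : Set (A × B), α ∈ eng T) → ∃ f : A → Option B, MaxDPF (eng T) f

/-- `EMPCF(A,B,T)` implies `EMPCF⁻(A,B,T)`. -/
theorem EMPCF_implies_EMPCFminus (A : Type u) (B : Type v)
    (T : Set (List (A × B))) : EMPCF T → EMPCFminus T := by
  intro h hex
  obtain ⟨f, hf1, hf2⟩ := h hex
  refine ⟨dgraph f, ?_, hf1, ?_⟩
  · intro a b b' hb hb'
    simp only [dgraph, Set.mem_setOf_eq] at hb hb'
    rw [hb] at hb'
    exact Option.some_inj.mp hb'
  · rintro g hgrpf ⟨a, ha, hdom, hext⟩ hgT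
    classical
    have hrdom : rdom (dgraph f) = ddom f := by
      ext x
      constructor
      · rintro ⟨b, hb⟩
        simp only [dgraph, Set.mem_setOf_eq] at hb
        simp [ddom, hb]
      · intro hx
        simp only [ddom, Set.mem_setOf_eq] at hx
        obtain ⟨b, hb⟩ := Option.ne_none_iff_exists'.mp hx
        exact ⟨b, hb⟩
    set g' : A → Option B := fun x => if hx : x ∈ rdom g then some hx.choose else none with hg'
    have hddomg' : ddom g' = rdom g := by
      ext x
      simp only [ddom, Set.mem_setOf_eq, hg']
      by_cases hx : x ∈ rdom g <;> simp [hx]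
    have hsub : dgraph g' ⊆ g := by
      rintro ⟨x, b⟩ hxb
      simp only [dgraph, Set.mem_setOf_eq, hg'] at hxb
      split at hxb
      · next hx => rw [← Option.some_inj.mp hxb]; exact hx.choose_spec
      · exact absurd hxb (by simp)
    have hdext : dext g' f := by
      refine ⟨a, by rwa [← hrdom], by rw [hddomg', hdom, hrdom], ?_⟩
      intro x hx
      rw [← hrdom] at hx
      obtain ⟨b, hbf, hbg⟩ := hext x hx
      have hxg : x ∈ rdom g := ⟨b, hbg⟩
      have hc : hxg.choose = b := hgrpf x _ _ hxg.choose_spec hbg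
      simp only [hg', dif_pos hxg, hc]
      exact hbf
    have hmem : dgraph g' ∈ eng T := fun l hl => hgT l (fun p hp => hsub (hl p hp))
    exact hf2 g' hdext hmem

end Paper
end

section
/- Let A be a type and T : Set (List A). Let π : List (A × Unit) → List A be the pointwise first projection and π*T := {u : List (A × Unit) | π u ∈ T}. Then EMPCF⁻(A, Unit, π*T) implies TTL(A, T). -/
namespace Paper

universe u v

/-- `EMPCF⁻(A, Unit, π*T)` implies `TTL(A, T)`, where `π` is the
pointwise first projection. -/
theorem EMPCFminus_proj_implies_TTL (A : Type u) (T : Set (List A)) :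
    EMPCFminus {l : List (A × Unit) | l.map Prod.fst ∈ T} → TTL T := by
  intro h ⟨α, hα⟩
  obtain ⟨f, hfrpf, hfT, hfmax⟩ := h ⟨{p | p.1 ∈ α}, by
    intro l hl
    exact hα (l.map Prod.fst) (by
      intro a ha
      obtain ⟨p, hp, rfl⟩ := List.mem_map.1 ha
      exact hl p hp)⟩
  refine ⟨rdom f, ?_, ?_⟩
  · intro l hl
    have : (l.map (fun a => (a, ()))) ∈ {l : List (A × Unit) | l.map Prod.fst ∈ T} := by
      apply hfT
      intro p hp
      obtain ⟨a, ha, rfl⟩ := List.mem_map.1 hp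
      obtain ⟨b, hb⟩ := hl a ha
      cases b
      exact hb
    simpa [List.map_map, Function.comp_def] using this
  · rintro β ⟨a, haf, rfl⟩ hβ
    refine hfmax (f ∪ {(a, ())}) ?_ ?_ ?_
    · intro x b b' _ _
      cases b; cases b'; rfl
    · refine ⟨a, haf, ?_, ?_⟩
      · ext x
        constructor
        · rintro ⟨b, hb | hb⟩
          · exact Or.inl ⟨b, hb⟩
          · right
            have : (x, b) = (a, ()) := hb
            simp [Prod.ext_iff] at this
            simp [this]
        · rintro (⟨b, hb⟩ | hx)
          · exact ⟨b, Or.inl hb⟩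
          · exact ⟨(), Or.inr (by simp at hx; simp [hx])⟩
      · rintro x ⟨b, hb⟩
        exact ⟨b, hb, Or.inl hb⟩
    · intro l hl
      apply hβ
      intro x hx
      obtain ⟨p, hp, rfl⟩ := List.mem_map.1 hx
      rcases hl p hp with h1 | h1
      · exact Or.inl ⟨p.2, by simpa using h1⟩
      · have : p = (a, ()) := h1
        simp [this]

end Paper
end

section
/- Assume GDC(ℕ, B, T) holds for every type B and every T : Set (List (ℕ × B)). Then (using classical logic) EMPCF(ℕ, B, T) holds for every type B and every T : Set (List (ℕ × B)). -/
namespace Paper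

universe u v

/-- The operator `φ` used to define `A`-`B`-approximability. -/
def phi {A : Type u} {B : Type v} (T X : Set (List (A × B))) : Set (List (A × B)) :=
  {l | l ∈ res (eng T) ∧ ∀ a : A, (¬ ∃ b, (a, b) ∈ l) → ∃ b, l ++ [(a, b)] ∈ X}

/-- `T` is `A`-`B`-approximable: `[]` is in the greatest fixed point of `φ`,
equivalently there is a `φ`-dense set containing `[]`. -/
def Approximable {A : Type u} {B : Type v} (T : Set (List (A × B))) : Prop :=
  ∃ X : Set (List (A × B)), X ⊆ phi T X ∧ [] ∈ X

/-- `T` has an `A`-`B`-choice function. -/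
def HasChoiceFun {A : Type u} {B : Type v} (T : Set (List (A × B))) : Prop :=
  ∃ f : A → B, ∀ l : List (A × B), listSub l {p : A × B | f p.1 = p.2} → l ∈ T

/-- Generalised dependent choice. -/
def GDC {A : Type u} {B : Type v} (T : Set (List (A × B))) : Prop :=
  Approximable T → HasChoiceFun T

/-!
A point `a` outside the domain of a maximal partial choice function is certified by a
refutation: for every value `b`, a finite list `w b ⊂ G f ∪ {(a, b)}` lying outside `T`.
We let each point carry either a value or such a refutation, and let `T'` consist of the lists
whose values form a set in `⟨T⟩` and whose refutations agree with the values present. `T'` is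
approximable: at a fresh point either some value keeps the values in `⟨T⟩`, or every value is
refuted by a finite list. A choice function for `T'` then yields a partial function whose graph is
in `⟨T⟩`, and any one-point extension of it contains one of the refuting lists, so it is maximal.
-/

lemma eng_anti {X : Type*} {T : Set (List X)} {α β : Set X} (hα : α ∈ eng T) (hβα : β ⊆ α) :
    β ∈ eng T :=
  fun l hl => hα l fun p hp => hβα (hl p hp)

lemma listSub_map_graph {X Y : Type*} (f : X → Y) (xs : List X) :
    listSub (xs.map fun x => (x, f x)) {p | f p.1 = p.2} := by
  simp [listSub]

def IsFunctional {X Y : Type*} (u : List (X × Y)) : Prop :=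
  ∀ x y₁ y₂, (x, y₁) ∈ u → (x, y₂) ∈ u → y₁ = y₂

lemma IsFunctional.append_fresh {X Y : Type*} {u : List (X × Y)} (hu : IsFunctional u) {x : X}
    (hx : ¬ ∃ y, (x, y) ∈ u) (y : Y) : IsFunctional (u ++ [(x, y)]) := by
  intro x' y₁ y₂ h₁ h₂
  simp only [List.mem_append, List.mem_singleton, Prod.mk.injEq] at h₁ h₂
  rcases h₁ with h₁ | ⟨rfl, rfl⟩ <;> rcases h₂ with h₂ | ⟨hx', rfl⟩
  · exact hu _ _ _ h₁ h₂
  · exact absurd ⟨y₁, hx' ▸ h₁⟩ hx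
  · exact absurd ⟨y₂, h₂⟩ hx
  · rfl

section Refutation

variable {A : Type u} {B : Type v}

abbrev Answer (A : Type u) (B : Type v) : Type (max u v) := B ⊕ (B → List (A × B))

def valuesOf (u : List (A × Answer A B)) : Set (A × B) := {p | (p.1, Sum.inl p.2) ∈ u}

@[simp] lemma valuesOf_nil : valuesOf ([] : List (A × Answer A B)) = ∅ := by
  simp [valuesOf]

@[simp] lemma valuesOf_append_inl (u : List (A × Answer A B)) (a : A) (b : B) :
    valuesOf (u ++ [(a, Sum.inl b)]) = insert (a, b) (valuesOf u) := by
  ext ⟨x, y⟩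
  simp [valuesOf, or_comm]

@[simp] lemma valuesOf_append_inr (u : List (A × Answer A B)) (a : A) (w : B → List (A × B)) :
    valuesOf (u ++ [(a, Sum.inr w)]) = valuesOf u := by
  ext
  simp [valuesOf]

/-- A refutation only constrains the points present in the list, so membership passes to
sublists. -/
def refutationTree (T : Set (List (A × B))) : Set (List (A × Answer A B)) :=
  {u | valuesOf u ∈ eng T ∧
    ∀ a w, (a, Sum.inr w) ∈ u → ∀ b, w b ∉ T ∧
      ∀ p ∈ w b, p ≠ (a, b) → ∀ β, (p.1, β) ∈ u → β = Sum.inl p.2}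

structure IsGoodApprox (T : Set (List (A × B))) (u : List (A × Answer A B)) : Prop where
  values_mem : valuesOf u ∈ eng T
  functional : IsFunctional u
  refutes : ∀ a w, (a, Sum.inr w) ∈ u → ∀ b, w b ∉ T ∧ listSub (w b) (insert (a, b) (valuesOf u))

variable {T : Set (List (A × B))} {u : List (A × Answer A B)} {a : A}

lemma isGoodApprox_nil (hT : ∅ ∈ eng T) : IsGoodApprox T [] :=
  ⟨by simpa using hT, by simp [IsFunctional], by simp⟩

lemma IsGoodApprox.mem_res (hu : IsGoodApprox T u) : u ∈ res (eng (refutationTree T)) := by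
  intro l hl
  refine ⟨eng_anti hu.values_mem fun p hp => hl _ hp, fun a w haw b => ?_⟩
  obtain ⟨hnotT, hsub⟩ := hu.refutes a w (hl _ haw) b
  exact ⟨hnotT, fun p hp hne β hβ => hu.functional _ _ _ (hl _ hβ) ((hsub p hp).resolve_left hne)⟩

lemma IsGoodApprox.append_inl (hu : IsGoodApprox T u) (ha : ¬ ∃ β, (a, β) ∈ u) {b : B}
    (hb : insert (a, b) (valuesOf u) ∈ eng T) : IsGoodApprox T (u ++ [(a, Sum.inl b)]) where
  values_mem := by rwa [valuesOf_append_inl]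
  functional := hu.functional.append_fresh ha _
  refutes a' w hw b' := by
    obtain ⟨hnotT, hsub⟩ := hu.refutes a' w (by simpa using hw) b'
    rw [valuesOf_append_inl]
    exact ⟨hnotT, fun p hp => Set.insert_subset_insert (Set.subset_insert _ _) (hsub p hp)⟩

lemma IsGoodApprox.append_inr (hu : IsGoodApprox T u) (ha : ¬ ∃ β, (a, β) ∈ u)
    {w : B → List (A × B)} (hw : ∀ b, w b ∉ T ∧ listSub (w b) (insert (a, b) (valuesOf u))) :
    IsGoodApprox T (u ++ [(a, Sum.inr w)]) where
  values_mem := by rw [valuesOf_append_inr]; exact hu.values_mem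
  functional := hu.functional.append_fresh ha _
  refutes a' w' hw' := by
    rw [valuesOf_append_inr]
    rcases List.mem_append.1 hw' with hw' | hw'
    · exact hu.refutes a' w' hw'
    · obtain ⟨rfl, rfl⟩ : a' = a ∧ w' = w := by simpa using hw'
      exact hw

lemma IsGoodApprox.exists_append (hu : IsGoodApprox T u) (ha : ¬ ∃ β, (a, β) ∈ u) :
    ∃ β, IsGoodApprox T (u ++ [(a, β)]) := by
  by_cases hb : ∃ b, insert (a, b) (valuesOf u) ∈ eng T
  · obtain ⟨b, hb⟩ := hb
    exact ⟨_, hu.append_inl ha hb⟩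
  · have hrefute : ∀ b, ∃ l, l ∉ T ∧ listSub l (insert (a, b) (valuesOf u)) := by
      simpa [eng, and_comm] using hb
    choose w hw using hrefute
    exact ⟨_, hu.append_inr ha hw⟩

lemma approximable_refutationTree (hT : ∅ ∈ eng T) : Approximable (refutationTree T) :=
  ⟨{u | IsGoodApprox T u}, fun _ hu => ⟨hu.mem_res, fun _ ha => hu.exists_append ha⟩,
    isGoodApprox_nil hT⟩

variable {f : A → Answer A B}

lemma dgraph_getLeft_mem_eng
    (hf : ∀ l, listSub l {p : A × Answer A B | f p.1 = p.2} → l ∈ refutationTree T) :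
    dgraph (fun a => (f a).getLeft?) ∈ eng T := by
  intro l hl
  refine (hf _ (listSub_map_graph f (l.map Prod.fst))).1 l fun p hp => ?_
  have hfp : f p.1 = Sum.inl p.2 := Sum.getLeft?_eq_some_iff.1 (hl p hp)
  show (p.1, Sum.inl p.2) ∈ (l.map Prod.fst).map fun x => (x, f x)
  rw [← hfp]
  exact List.mem_map_of_mem (List.mem_map_of_mem hp)

lemma dgraph_not_mem_eng_of_dext
    (hf : ∀ l, listSub l {p : A × Answer A B | f p.1 = p.2} → l ∈ refutationTree T)
    {g : A → Option B} (hg : dext g fun a => (f a).getLeft?) : dgraph g ∉ eng T := by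
  obtain ⟨a, ha, hdom, hagree⟩ := hg
  intro hgT
  obtain ⟨w, hw⟩ : ∃ w, f a = Sum.inr w :=
    Sum.isRight_iff.1 (Sum.getLeft?_eq_none_iff.1 (not_not.1 ha))
  obtain ⟨b, hb⟩ : ∃ b, g a = some b :=
    Option.ne_none_iff_exists'.1 (hdom ▸ Set.mem_union_right _ rfl : a ∈ ddom g)
  have hlist := hf _ (listSub_map_graph f (a :: (w b).map Prod.fst))
  obtain ⟨hnotT, hagreeVals⟩ := hlist.2 a w (by simp [hw]) b
  refine hnotT (hgT _ fun p hp => ?_)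
  by_cases hpab : p = (a, b)
  · subst hpab
    exact hb
  · have hfp : (f p.1).getLeft? = some p.2 := by
      rw [hagreeVals p hp hpab (f p.1)
        (List.mem_map_of_mem (List.mem_cons_of_mem _ (List.mem_map_of_mem hp)))]
      rfl
    show g p.1 = some p.2
    rw [← hagree p.1 (show (f p.1).getLeft? ≠ none by simp [hfp])]
    exact hfp

theorem empcf_of_gdc_refutationTree (T : Set (List (A × B))) (h : GDC (refutationTree T)) :
    EMPCF T := by
  rintro ⟨α, hα⟩
  obtain ⟨f, hf⟩ := h (approximable_refutationTree (eng_anti hα (Set.empty_subset α)))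
  exact ⟨_, dgraph_getLeft_mem_eng hf, fun _ => dgraph_not_mem_eng_of_dext hf⟩

end Refutation

/-- if `GDC(ℕ, B, T)` holds for every `B` and `T`, then
`EMPCF(ℕ, B, T)` holds for every `B` and `T`. -/
theorem GDC_nat_implies_EMPCF_nat
    (h : ∀ (B : Type u) (T : Set (List (ℕ × B))), GDC T) :
    ∀ (B : Type u) (T : Set (List (ℕ × B))), EMPCF T :=
  fun _ T => empcf_of_gdc_refutationTree T (h _ _)

end Paper
end

section
/- Let A be a type with decidable equality. If EMPCF(A, Bool, T') holds for every T' : Set (List (A × Bool)), then GDC(A, Bool, T) holds for every T : Set (List (A × Bool)). -/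
namespace Paper

universe u v

/-! Let `X` be a `φ`-dense set containing `[]` and `T'` the lists covered by a member of `X`;
EMPCF yields a dpf-maximal `f` in `⟨T'⟩`. If `a ∉ dom f`, each one-point extension
`G f ∪ {(a, b)}` has a finite witness `u_b ∉ T'`. The parts of `u_false` and `u_true` inside
`G f` are covered by some `v ∈ X`, and density extends `v` to some `w ∈ X` deciding `a`, say
by `b`; then `w` covers `u_b`, a contradiction. So `f` is total, and since every member of `X`
lies in `⌊⟨T⟩⌋`, its graph lies in `⟨T⟩`. -/

section

variable {A : Type u} {B : Type v}

def listDownset (X : Set (List A)) : Set (List A) :=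
  {u | ∃ v ∈ X, listSub u (hat v)}

theorem empty_mem_eng_listDownset {X : Set (List A)} (hX : [] ∈ X) :
    ∅ ∈ eng (listDownset X) :=
  fun _ hl => ⟨[], hX, fun p hp => (hl p hp).elim⟩

theorem eng_listDownset_subset {T X : Set (List A)} (hX : X ⊆ res (eng T)) :
    eng (listDownset X) ⊆ eng T := fun _ hα l hl =>
  let ⟨_, hv, hlv⟩ := hα l hl
  hX hv l hlv

theorem exists_listSub_forall_listSub_union {ι : Type*} [Finite ι] (G : Set A)
    (S : ι → Set A) (u : ι → List A) (hu : ∀ i, listSub (u i) (G ∪ S i)) :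
    ∃ v, listSub v G ∧ ∀ i, listSub (u i) (hat v ∪ S i) := by
  classical
  cases nonempty_fintype ι
  refine ⟨(Finset.univ.toList.flatMap u).filter (· ∈ G), fun p hp => ?_, fun i p hp => ?_⟩
  · simpa using (List.mem_filter.1 hp).2
  · rcases hu i p hp with hG | hS
    · exact Or.inl (List.mem_filter.2 ⟨List.mem_flatMap.2 ⟨i, by simp, hp⟩, by simpa using hG⟩)
    · exact Or.inr hS

theorem exists_mem_superset_of_subset_phi {T X : Set (List (A × B))} (hX : X ⊆ phi T X)
    {v : List (A × B)} (hv : v ∈ X) (a : A) :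
    ∃ b, ∃ w ∈ X, listSub v (hat w) ∧ (a, b) ∈ w := by
  by_cases ha : ∃ b, (a, b) ∈ v
  · obtain ⟨b, hb⟩ := ha
    exact ⟨b, v, hv, fun _ hp => hp, hb⟩
  · obtain ⟨b, hb⟩ := (hX hv).2 a ha
    exact ⟨b, _, hb, fun _ hp => List.mem_append_left _ hp,
      List.mem_append_right _ (List.mem_singleton_self _)⟩

theorem dext_update_of_eq_none [DecidableEq A] {f : A → Option B} {a : A} (ha : f a = none)
    (b : B) : dext (Function.update f a (some b)) f := by
  refine ⟨a, by simp [ddom, ha], ?_, fun x hx => ?_⟩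
  · ext x
    by_cases hx : x = a <;> simp [ddom, Function.update, hx, ha]
  · have hxa : x ≠ a := by
      rintro rfl
      exact hx ha
    simp [Function.update, hxa]

theorem dgraph_update_of_eq_none [DecidableEq A] {f : A → Option B} {a : A} (ha : f a = none)
    (b : B) : dgraph (Function.update f a (some b)) = dgraph f ∪ {(a, b)} := by
  ext ⟨x, y⟩
  by_cases hx : x = a
  · subst hx
    simp [dgraph, ha, eq_comm]
  · simp [dgraph, hx]

theorem MaxDPF.ne_none [Finite B] {T X : Set (List (A × B))} (hX : X ⊆ phi T X)
    {f : A → Option B} (hf : MaxDPF (eng (listDownset X)) f) (a : A) : f a ≠ none := by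
  classical
  intro ha
  have hext : ∀ b, ∃ u, listSub u (dgraph f ∪ {(a, b)}) ∧ u ∉ listDownset X := by
    intro b
    have hb := hf.2 _ (dext_update_of_eq_none ha b)
    rw [dgraph_update_of_eq_none ha] at hb
    simpa [eng] using hb
  choose u hu huX using hext
  obtain ⟨v, hvf, huv⟩ := exists_listSub_forall_listSub_union _ _ u hu
  obtain ⟨w₀, hw₀, hvw₀⟩ := hf.1 v hvf
  obtain ⟨b, w, hw, hw₀w, hab⟩ := exists_mem_superset_of_subset_phi hX hw₀ a
  refine huX b ⟨w, hw, fun p hp => ?_⟩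
  rcases huv b p hp with hpv | rfl
  · exact hw₀w _ (hvw₀ _ hpv)
  · exact hab

theorem hasChoiceFun_of_ne_none {T : Set (List (A × B))} {f : A → Option B}
    (hf : ∀ a, f a ≠ none) (hT : dgraph f ∈ eng T) : HasChoiceFun T := by
  choose F hF using fun a => Option.ne_none_iff_exists'.1 (hf a)
  exact ⟨F, fun l hl => hT l fun p hp => (hF p.1).trans (congrArg some (hl p hp))⟩

end

theorem EMPCF_bool_implies_GDC_bool_general (A : Type u)
    (h : ∀ T' : Set (List (A × Bool)), EMPCF T') :
    ∀ T : Set (List (A × Bool)), GDC T := by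
  rintro T ⟨X, hX, hnil⟩
  obtain ⟨f, hf⟩ := h (listDownset X) ⟨∅, empty_mem_eng_listDownset hnil⟩
  exact hasChoiceFun_of_ne_none (hf.ne_none hX)
    (eng_listDownset_subset (fun _ hv => (hX hv).1) hf.1)

/-- if `EMPCF(A, Bool, T')` holds for every `T'`, then
`GDC(A, Bool, T)` holds for every `T` (`A` with decidable equality). -/
theorem EMPCF_bool_implies_GDC_bool (A : Type u) [DecidableEq A]
    (h : ∀ T' : Set (List (A × Bool)), EMPCF T') :
    ∀ T : Set (List (A × Bool)), GDC T :=
  EMPCF_bool_implies_GDC_bool_general A h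

end Paper
end

section
/- For all types A, B and any relation R : A → B → Prop, the positive alignment R_⊤ contains the empty list and satisfies (u ++ v ∈ R_⊤) ↔ (u ∈ R_⊤ ∧ v ∈ R_⊤) for all u, v (in particular R_⊤ is downward prime). Conversely, if T : Set (List (A × B)) contains the empty list and satisfies (u ++ v ∈ T) ↔ (u ∈ T ∧ v ∈ T) for all u, v, then T is the positive alignment of the relation |T|, i.e. T = |T|_⊤. -/
namespace Paper

universe u v

/-- `T` is downward prime. -/
def DownwardPrime {A : Type u} {B : Type v} (T : Set (List (A × B))) : Prop :=
  ∀ l v : List (A × B), l ∈ T → v ∈ T → l ++ v ∈ T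

/-- Positive alignment of a relation `R`. -/
def align {A : Type u} {B : Type v} (R : A → B → Prop) : Set (List (A × B)) :=
  {l | ∀ p ∈ l, R p.1 p.2}

/-- positive alignments contain `[]` and split over `++`
(hence are downward prime); conversely any `T` with these properties is the
positive alignment of `|T|`. -/
theorem align_characterisation (A : Type u) (B : Type v) :
    (∀ R : A → B → Prop,
      [] ∈ align R ∧
        ∀ l v : List (A × B), l ++ v ∈ align R ↔ l ∈ align R ∧ v ∈ align R) ∧
    (∀ T : Set (List (A × B)), [] ∈ T →
      (∀ l v : List (A × B), l ++ v ∈ T ↔ l ∈ T ∧ v ∈ T) →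
      T = align (fun a b => [(a, b)] ∈ T)) := by
  constructor
  · intro R
    refine ⟨by simp [align], fun l v => ?_⟩
    simp only [align, Set.mem_setOf_eq, List.mem_append]
    constructor
    · intro h; exact ⟨fun p hp => h p (Or.inl hp), fun p hp => h p (Or.inr hp)⟩
    · rintro ⟨h1, h2⟩ p (hp | hp); exact h1 p hp; exact h2 p hp
  · intro T hnil hsplit
    ext l
    induction l with
    | nil => simpa [align] using hnil
    | cons p t ih =>
      have : p :: t = [p] ++ t := rfl
      rw [this, hsplit]
      simp only [align, Set.mem_setOf_eq] at ih ⊢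
      constructor
      · rintro ⟨h1, h2⟩ q hq
        rcases List.mem_cons.mp hq with rfl | hq
        · exact h1
        · exact ih.mp h2 q hq
      · intro h
        exact ⟨h p (by simp), ih.mpr fun q hq => h q (List.mem_cons_of_mem _ hq)⟩

end Paper
end
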